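/- On the round unit sphere, the edth-prime operator ð' acting on smooth spin-weight 2 quantities is injective: if η has spin weight 2 (globally defined on the sphere) and ð'η = 0, then η = 0. Consequently, for any smooth spin-weight 3 source F (of the appropriate type), the equation ð'R = F has at most one solution R of spin weight 2. -/

import Mathlib

open Complex Metric Set Bornology Filter Topology


/-- `P(z,z̄) = (1 + z z̄)/√2`. -/
noncomputable def Pc (z : ℂ) : ℂ := (1 + z * starRingEnd ℂ z) / (Real.sqrt 2 : ℝ)

/-- Wirtinger derivative `∂_z = ½(∂_x − i ∂_y)`. -/
noncomputable def dzw (f : ℂ → ℂ) (z : ℂ) : ℂ :=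
  (fderiv ℝ f z 1 - Complex.I * fderiv ℝ f z Complex.I) / 2

/-- Edth-prime on the round unit sphere: `ð' η = P^(1+s) ∂_z (P^(-s) η)`. -/
noncomputable def ethp (s : ℤ) (f : ℂ → ℂ) (z : ℂ) : ℂ :=
  Pc z ^ (1 + s) * dzw (fun w => Pc w ^ (-s) * f w) z

/-- A smooth spin-weight 2 quantity which is globally defined on the sphere, i.e.
`v ↦ η(1/v) v² v̄^(−2)` extends smoothly across the origin. -/
def GlobalSpin2 (eta : ℂ → ℂ) : Prop :=
  ContDiff ℝ (⊤ : ℕ∞) eta ∧ ∃ F : ℂ → ℂ, ContDiff ℝ (⊤ : ℕ∞) F ∧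
    ∀ v : ℂ, v ≠ 0 → F v = eta (1 / v) * v ^ 2 * (starRingEnd ℂ v) ^ (-2 : ℤ)

lemma Pc_eq_real (z : ℂ) : Pc z = ((1 + Complex.normSq z) / Real.sqrt 2 : ℝ) := by
  rw [Pc, Complex.mul_conj]
  push_cast
  ring

lemma Pc_ne_zero (z : ℂ) : Pc z ≠ 0 := by
  rw [Pc_eq_real]
  have h1 : (0:ℝ) < 1 + Complex.normSq z := by linarith [Complex.normSq_nonneg z]
  have h2 : (0:ℝ) < Real.sqrt 2 := by positivity
  exact_mod_cast ne_of_gt (div_pos h1 h2)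

lemma norm_Pc (z : ℂ) : ‖Pc z‖ = (1 + Complex.normSq z) / Real.sqrt 2 := by
  rw [Pc_eq_real, Complex.norm_real, Real.norm_eq_abs, abs_of_pos (by have := Complex.normSq_nonneg z; positivity)]

lemma contDiff_Pc : ContDiff ℝ (⊤ : ℕ∞) Pc := by
  have hconj : ContDiff ℝ (⊤ : ℕ∞) (fun z : ℂ => starRingEnd ℂ z) := Complex.conjCLE.contDiff
  have : ContDiff ℝ (⊤ : ℕ∞) (fun z : ℂ => 1 + z * starRingEnd ℂ z) :=
    contDiff_const.add (contDiff_id.mul hconj)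
  exact this.div_const _



lemma clm_decomp (L : ℂ →L[ℝ] ℂ) (x : ℂ) :
    L x = (x.re : ℂ) * L 1 + (x.im : ℂ) * L Complex.I := by
  have hx : x = x.re • (1:ℂ) + x.im • Complex.I := by
    simp [Complex.real_smul, Complex.re_add_im]
  calc L x = L (x.re • (1:ℂ) + x.im • Complex.I) := by rw [← hx]
  _ = x.re • L 1 + x.im • L Complex.I := by rw [map_add, map_smul, map_smul]
  _ = _ := by simp [Complex.real_smul]

lemma antiholo {g : ℂ → ℂ} (hg : Differentiable ℝ g) (hdz : ∀ z, dzw g z = 0) :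
    Differentiable ℂ (fun z => starRingEnd ℂ (g z)) := by
  intro z
  set L := fderiv ℝ g z with hLdef
  have hL : HasFDerivAt g L z := (hg z).hasFDerivAt
  have h0 : L 1 = Complex.I * L Complex.I := by
    have h := hdz z
    rw [dzw] at h
    rw [div_eq_zero_iff] at h
    rcases h with h | h
    · exact sub_eq_zero.mp h
    · norm_num at h
  set c := starRingEnd ℂ (L 1) with hc
  have hLI : L Complex.I = -Complex.I * L 1 := by
    rw [h0, neg_mul, ← mul_assoc, Complex.I_mul_I]
    ring
  have key : ∀ x : ℂ, starRingEnd ℂ (L x) = c * x := by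
    intro x
    rw [clm_decomp L x, hLI, map_add, map_mul, map_mul, Complex.conj_ofReal,
      Complex.conj_ofReal, map_mul, map_neg, Complex.conj_I, ← hc]
    conv_rhs => rw [← Complex.re_add_im x]
    ring
  have hM : HasFDerivAt (fun z => starRingEnd ℂ (g z))
      ((c • ContinuousLinearMap.id ℂ ℂ).restrictScalars ℝ) z := by
    have hcomp := ((Complex.conjCLE : ℂ →L[ℝ] ℂ).hasFDerivAt (x := g z)).comp z hL
    have heq : ((c • ContinuousLinearMap.id ℂ ℂ).restrictScalars ℝ)
        = (Complex.conjCLE : ℂ →L[ℝ] ℂ).comp L := by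
      ext x
      simp only [ContinuousLinearMap.coe_restrictScalars', ContinuousLinearMap.smul_apply,
        ContinuousLinearMap.id_apply, ContinuousLinearMap.coe_comp', Function.comp_apply,
        ContinuousLinearEquiv.coe_coe, Complex.conjCLE_apply, smul_eq_mul]
      exact (key x).symm
    rw [heq]
    exact hcomp
  exact (hasFDerivAt_of_restrictScalars ℝ hM rfl).differentiableAt





lemma gfun_eq (eta : ℂ → ℂ) :
    (fun w => Pc w ^ (-(2:ℤ)) * eta w) = fun w => eta w / Pc w ^ 2 := by
  funext w
  rw [zpow_neg, show ((2:ℤ) : ℤ) = ((2:ℕ) : ℤ) from rfl, zpow_natCast]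
  rw [inv_mul_eq_div]

lemma g_diff {eta : ℂ → ℂ} (hs : ContDiff ℝ (⊤ : ℕ∞) eta) :
    Differentiable ℝ (fun w => eta w / Pc w ^ 2) := by
  have h1 : Differentiable ℝ eta := hs.differentiable (by simp)
  have h2 : Differentiable ℝ (fun w => Pc w ^ 2) :=
    (contDiff_Pc.differentiable (by simp)).pow 2
  have h3 : Differentiable ℝ (fun w => (Pc w ^ 2)⁻¹) :=
    h2.inv (fun z => pow_ne_zero 2 (Pc_ne_zero z))
  simpa [div_eq_mul_inv] using h1.fun_mul h3

lemma eth_inj (eta : ℂ → ℂ) (h : GlobalSpin2 eta) (h0 : ∀ z, ethp 2 eta z = 0) :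
    eta = 0 := by
  obtain ⟨hs, F, hF, hFv⟩ := h
  set g : ℂ → ℂ := fun w => eta w / Pc w ^ 2 with hgdef
  have hgd : Differentiable ℝ g := g_diff hs
  have hdz : ∀ z, dzw g z = 0 := by
    intro z
    have h1 := h0 z
    rw [ethp, gfun_eq eta] at h1
    rcases mul_eq_zero.mp h1 with h2 | h2
    · exact absurd h2 (zpow_ne_zero _ (Pc_ne_zero z))
    · exact h2
  set u : ℂ → ℂ := fun z => starRingEnd ℂ (g z) with hudef
  have hu : Differentiable ℂ u := antiholo hgd hdz
  -- bound on F on the closed unit ball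
  obtain ⟨C, hC⟩ := (isCompact_closedBall (0:ℂ) 1).exists_bound_of_continuousOn
    hF.continuous.continuousOn
  have hC0 : 0 ≤ C := le_trans (norm_nonneg _) (hC 0 (by simp))
  -- key pointwise bound for ‖eta w‖ when ‖w‖ ≥ 1
  have hetaw : ∀ w : ℂ, 1 ≤ ‖w‖ → ‖eta w‖ ≤ C := by
    intro w hw
    have hwne : w ≠ 0 := by
      intro hw0; rw [hw0] at hw; simp at hw; linarith
    have hv : (w⁻¹ : ℂ) ≠ 0 := inv_ne_zero hwne
    have hFe := hFv w⁻¹ hv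
    rw [one_div, inv_inv] at hFe
    have hnorm : ‖F w⁻¹‖ = ‖eta w‖ := by
      rw [hFe]
      rw [norm_mul, norm_mul, norm_pow, norm_zpow, RingHomIsometric.norm_map]
      have : ‖(w⁻¹ : ℂ)‖ ≠ 0 := by simpa using hwne
      rw [mul_assoc, ← zpow_natCast ‖(w⁻¹:ℂ)‖ 2, ← zpow_add₀ this]
      norm_num
    have hmem : w⁻¹ ∈ closedBall (0:ℂ) 1 := by
      simp only [mem_closedBall, dist_zero_right, norm_inv]
      exact inv_le_one_of_one_le₀ hw
    rw [← hnorm]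
    exact hC _ hmem
  have hPc_sq : ∀ w : ℂ, Complex.normSq w ^ 2 / 2 ≤ ‖Pc w‖ ^ 2 := by
    intro w
    rw [norm_Pc, div_pow, Real.sq_sqrt (by norm_num : (2:ℝ) ≥ 0)]
    have := Complex.normSq_nonneg w
    nlinarith
  have hPc_sq1 : ∀ w : ℂ, (1:ℝ) / 2 ≤ ‖Pc w‖ ^ 2 := by
    intro w
    rw [norm_Pc, div_pow, Real.sq_sqrt (by norm_num : (2:ℝ) ≥ 0)]
    have := Complex.normSq_nonneg w
    nlinarith
  have hnorm_u : ∀ w : ℂ, ‖u w‖ = ‖eta w‖ / ‖Pc w‖ ^ 2 := by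
    intro w
    have h1 : ‖u w‖ = ‖g w‖ := RingHomIsometric.norm_map
    rw [h1, hgdef]
    simp [norm_div]
  -- u is bounded
  obtain ⟨K, hK⟩ := (isCompact_closedBall (0:ℂ) 1).exists_bound_of_continuousOn
    hu.continuous.continuousOn
  have hub : ∀ w : ℂ, ‖u w‖ ≤ max K (2 * C) := by
    intro w
    by_cases hw : ‖w‖ ≤ 1
    · exact le_max_of_le_left (hK w (by simpa [mem_closedBall, dist_zero_right] using hw))
    · push_neg at hw
      have heta := hetaw w hw.le
      refine le_max_of_le_right ?_
      rw [hnorm_u w]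
      calc ‖eta w‖ / ‖Pc w‖ ^ 2 ≤ C / (1 / 2) :=
            div_le_div₀ hC0 heta (by norm_num) (hPc_sq1 w)
      _ = 2 * C := by ring
  have hb : IsBounded (range u) := by
    refine isBounded_iff_forall_norm_le.2 ⟨max K (2 * C), ?_⟩
    rintro x ⟨w, rfl⟩
    exact hub w
  have hconst : ∀ w, u w = u 0 := fun w => hu.apply_eq_apply_of_bounded hb w 0
  have hzero : u 0 = 0 := by
    have hbound : ∀ n : ℕ, ‖u 0‖ ≤ 2 * C / (((n:ℝ) + 1) ^ 2) ^ 2 := by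
      intro n
      set w : ℂ := (((n:ℝ) + 1 : ℝ) : ℂ) with hwdef
      have hwn : ‖w‖ = (n:ℝ) + 1 := by
        rw [hwdef, Complex.norm_real, Real.norm_eq_abs, abs_of_pos (by positivity)]
      have h1w : 1 ≤ ‖w‖ := by rw [hwn]; simp
      have hns : Complex.normSq w = ((n:ℝ) + 1) ^ 2 := by
        rw [hwdef, Complex.normSq_ofReal]; ring
      have heta := hetaw w h1w
      have hPc : (((n:ℝ) + 1) ^ 2) ^ 2 / 2 ≤ ‖Pc w‖ ^ 2 := by
        have := hPc_sq w
        rwa [hns] at this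
      rw [← hconst w, hnorm_u w]
      calc ‖eta w‖ / ‖Pc w‖ ^ 2 ≤ C / ((((n:ℝ) + 1) ^ 2) ^ 2 / 2) :=
            div_le_div₀ hC0 heta (by positivity) hPc
      _ = 2 * C / (((n:ℝ) + 1) ^ 2) ^ 2 := by
            field_simp
    have htend : Tendsto (fun n : ℕ => 2 * C / (((n:ℝ) + 1) ^ 2) ^ 2) atTop (𝓝 0) := by
      apply Filter.Tendsto.div_atTop tendsto_const_nhds
      have h1 : Tendsto (fun n : ℕ => (n:ℝ) + 1) atTop atTop :=
        tendsto_atTop_add_const_right atTop 1 tendsto_natCast_atTop_atTop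
      exact ((tendsto_pow_atTop (by norm_num : (2:ℕ) ≠ 0)).comp
        ((tendsto_pow_atTop (by norm_num : (2:ℕ) ≠ 0)).comp h1))
    have hle : ‖u 0‖ ≤ 0 := ge_of_tendsto' htend hbound
    simpa using le_antisymm hle (norm_nonneg _)
  funext w
  have huw := hconst w
  rw [hzero] at huw
  have hg0 : g w = 0 := by
    have h2 := congrArg (starRingEnd ℂ) huw
    simpa [hudef, Complex.conj_conj] using h2
  have h3 : eta w / Pc w ^ 2 = 0 := hg0
  rcases div_eq_zero_iff.mp h3 with h4 | h4
  · simpa using h4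
  · exact absurd h4 (pow_ne_zero 2 (Pc_ne_zero w))

lemma dzw_sub {f₁ f₂ : ℂ → ℂ} {z : ℂ} (h₁ : DifferentiableAt ℝ f₁ z)
    (h₂ : DifferentiableAt ℝ f₂ z) :
    dzw (fun w => f₁ w - f₂ w) z = dzw f₁ z - dzw f₂ z := by
  unfold dzw
  rw [fderiv_fun_sub h₁ h₂]
  simp only [ContinuousLinearMap.sub_apply]
  ring

/-- `ð'` is injective on global spin-weight 2 quantities on the round unit sphere:
if `ð'η = 0` then `η = 0`; consequently the equation `ð'R = F` has at most one global
spin-weight 2 solution. -/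
theorem stmt_14 :
    (∀ eta : ℂ → ℂ, GlobalSpin2 eta → (∀ z, ethp 2 eta z = 0) → eta = 0) ∧
    (∀ F eta₁ eta₂ : ℂ → ℂ, GlobalSpin2 eta₁ → GlobalSpin2 eta₂ →
      (∀ z, ethp 2 eta₁ z = F z) → (∀ z, ethp 2 eta₂ z = F z) → eta₁ = eta₂) := by
  refine ⟨eth_inj, ?_⟩
  intro F eta₁ eta₂ h₁ h₂ he₁ he₂
  have hd : GlobalSpin2 (fun z => eta₁ z - eta₂ z) := by
    obtain ⟨hs₁, F₁, hF₁, hFv₁⟩ := h₁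
    obtain ⟨hs₂, F₂, hF₂, hFv₂⟩ := h₂
    exact ⟨hs₁.sub hs₂, fun v => F₁ v - F₂ v, hF₁.sub hF₂, fun v hv => by
      simp only []
      rw [hFv₁ v hv, hFv₂ v hv]; ring⟩
  have hz : ∀ z, ethp 2 (fun z => eta₁ z - eta₂ z) z = 0 := by
    intro z
    obtain ⟨hs₁, -⟩ := h₁
    obtain ⟨hs₂, -⟩ := h₂
    have hg₁ : DifferentiableAt ℝ (fun w => Pc w ^ (-(2:ℤ)) * eta₁ w) z := by
      rw [gfun_eq]; exact g_diff hs₁ z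
    have hg₂ : DifferentiableAt ℝ (fun w => Pc w ^ (-(2:ℤ)) * eta₂ w) z := by
      rw [gfun_eq]; exact g_diff hs₂ z
    have hsplit : (fun w => Pc w ^ (-(2:ℤ)) * (eta₁ w - eta₂ w))
        = fun w => (Pc w ^ (-(2:ℤ)) * eta₁ w) - (Pc w ^ (-(2:ℤ)) * eta₂ w) := by
      funext w; ring
    have : ethp 2 (fun z => eta₁ z - eta₂ z) z
        = ethp 2 eta₁ z - ethp 2 eta₂ z := by
      unfold ethp
      rw [hsplit, dzw_sub hg₁ hg₂]
      ring
    rw [this, he₁ z, he₂ z, sub_self]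
  have key := eth_inj _ hd hz
  funext z
  have := congrFun key z
  simpa [sub_eq_zero] using this
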